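/- Hash-table insertion succeeds when occupancy is low in every stage: in a multi-stage hash table with n stages of m slots each, if a request hashes to slot h in every stage and at least one of the n slots indexed h across the stages is empty, the insert procedure (scanning stages in order and writing to the first empty slot at index h) places the request, and a subsequent read with the same request id returns the stored server IP. -/

import Mathlib

abbrev ReqId := ℕ
abbrev IP := ℕ

/-- Insert `(r, ip)` at hash index `h` into the first stage whose slot `h` is empty. -/
def insertReq {n m : ℕ} (t : Fin n → Fin m → Option (ReqId × IP))
    (h : Fin m) (r : ReqId) (ip : IP) : Fin n → Fin m → Option (ReqId × IP) :=
  match (List.finRange n).find? (fun i => (t i h).isNone) with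
  | some i => fun i' s => if i' = i ∧ s = h then some (r, ip) else t i' s
  | none => t

/-- Read the server IP stored for request `r` at hash index `h`. -/
def readReq {n m : ℕ} (t : Fin n → Fin m → Option (ReqId × IP))
    (h : Fin m) (r : ReqId) : Option IP :=
  ((List.finRange n).find? (fun i => (t i h).map Prod.fst == some r)).bind
    (fun i => (t i h).map Prod.snd)

theorem List.find?_eq_some_of_imp {α : Type*} {p q : α → Bool} {l : List α} {a : α}
    (hqp : ∀ b, q b → p b) (hp : l.find? p = some a) (hq : q a) : l.find? q = some a := by
  obtain ⟨-, pre, post, rfl, hpre⟩ := List.find?_eq_some_iff_append.mp hp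
  refine List.find?_eq_some_iff_append.mpr ⟨hq, pre, post, rfl, fun b hb => ?_⟩
  cases hqb : q b
  · rfl
  · simpa [hqp b hqb] using hpre b hb

section HashTable

variable {n m : ℕ} (t : Fin n → Fin m → Option (ReqId × IP)) {h : Fin m}

theorem exists_find?_isNone (hempty : ∃ i, t i h = none) :
    ∃ i, (List.finRange n).find? (fun i => (t i h).isNone) = some i := by
  obtain ⟨j, hj⟩ := hempty
  exact Option.isSome_iff_exists.mp
    (List.find?_isSome.mpr ⟨j, List.mem_finRange j, by simp [hj]⟩)

theorem insertReq_of_find?_eq_some {i : Fin n} (r : ReqId) (ip : IP)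
    (hi : (List.finRange n).find? (fun i => (t i h).isNone) = some i) :
    insertReq t h r ip = fun i' s => if i' = i ∧ s = h then some (r, ip) else t i' s := by
  rw [insertReq, hi]

theorem readReq_of_find?_eq_some {r : ReqId} {ip : IP} {i : Fin n}
    (hi : (List.finRange n).find? (fun i => (t i h).map Prod.fst == some r) = some i)
    (hti : t i h = some (r, ip)) : readReq t h r = some ip := by
  simp [readReq, hi, hti]

end HashTable

theorem insert_then_read
    {n m : ℕ} (t : Fin n → Fin m → Option (ReqId × IP))
    (h : Fin m) (r : ReqId) (ip : IP)
    (hfresh : ∀ i x, t i h = some x → x.1 ≠ r)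
    (hempty : ∃ i, t i h = none) :
    readReq (insertReq t h r ip) h r = some ip := by
  obtain ⟨i₀, hi₀⟩ := exists_find?_isNone t hempty
  have hins := insertReq_of_find?_eq_some t r ip hi₀
  have hstored : insertReq t h r ip i₀ h = some (r, ip) := by simp [hins]
  -- Any stage holding `r` after the insertion must be the one just filled, so it was empty before.
  have hfirst : ∀ i, ((insertReq t h r ip i h).map Prod.fst == some r) → (t i h).isNone := by
    intro i hi
    by_cases hii₀ : i = i₀
    · subst hii₀
      simpa using List.find?_some hi₀
    · cases hti : t i h with
      | none => rfl
      | some x => simp [hins, hii₀, hti, hfresh i x hti] at hi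
  exact readReq_of_find?_eq_some _
    (List.find?_eq_some_of_imp hfirst hi₀ (by simp [hstored])) hstored
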